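/- Assume the p=3 parasupersymmetry algebra, with Q₁ = (Q† + Q)/(2√3) and Q₂ = (Q† − Q)/(2√3·i). Let Ψ ≠ 0 satisfy Q₁Ψ = q₁Ψ, HΨ = EΨ (q₁, E ∈ ℝ) and Q₂²Ψ = q₁²Ψ. Then (Q₁² + Q₂²)(Q₁Q₂ + Q₂Q₁)Ψ = (E − 2q₁²)(Q₁Q₂ + Q₂Q₁)Ψ; consequently, if (Q₁Q₂ + Q₂Q₁)Ψ ≠ 0, then E ≥ 2q₁² ≥ 0. -/

import Mathlib

/-!
With `K = Q₁² + Q₂²` and `M = Q₁Q₂ + Q₂Q₁` one computes `K = (Q†Q + QQ†)/6`, a positive operator,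
and `M = -(i/6)(Q†² - Q²)`. Relations (ii) and (iv) say precisely that `KM + MK = MH`. Since
`KΨ = 2q₁²Ψ` and `HΨ = EΨ`, the vector `MΨ` is then an eigenvector of `K` with eigenvalue
`E - 2q₁²`, which is nonnegative because `K` is positive.
-/

open ContinuousLinearMap

/-- The hermitian parasupercharge `Q₁ = (Q† + Q)/(2√3)`. -/
noncomputable def hermQ1 {𝓗 : Type*} [NormedAddCommGroup 𝓗] [InnerProductSpace ℂ 𝓗]
    [CompleteSpace 𝓗] (Q : 𝓗 →L[ℂ] 𝓗) : 𝓗 →L[ℂ] 𝓗 :=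
  ((2 * Real.sqrt 3 : ℝ) : ℂ)⁻¹ • (adjoint Q + Q)

/-- The hermitian parasupercharge `Q₂ = (Q† − Q)/(2√3·i)`. -/
noncomputable def hermQ2 {𝓗 : Type*} [NormedAddCommGroup 𝓗] [InnerProductSpace ℂ 𝓗]
    [CompleteSpace 𝓗] (Q : 𝓗 →L[ℂ] 𝓗) : 𝓗 →L[ℂ] 𝓗 :=
  (((2 * Real.sqrt 3 : ℝ) : ℂ) * Complex.I)⁻¹ • (adjoint Q - Q)

theorem ContinuousLinearMap.IsPositive.nonneg_of_apply_eq_smul {𝕜 E : Type*} [RCLike 𝕜]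
    [NormedAddCommGroup E] [InnerProductSpace 𝕜 E] {T : E →L[𝕜] E} (hT : T.IsPositive)
    {μ : ℝ} {v : E} (hv : v ≠ 0) (h : T v = (μ : 𝕜) • v) : 0 ≤ μ :=
  eigenvalue_nonneg_of_nonneg
    (Module.End.hasEigenvalue_of_hasEigenvector ⟨Module.End.mem_eigenspace_iff.mpr h, hv⟩)
    hT.re_inner_nonneg_right

theorem ContinuousLinearMap.apply_eq_smul_of_mul_add_mul_eq {R E : Type*} [CommRing R]
    [AddCommGroup E] [Module R E] [TopologicalSpace E] [IsTopologicalAddGroup E]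
    [ContinuousConstSMul R E] {A B C : E →L[R] E} (hABC : A * B + B * A = B * C)
    {a e : R} {v : E} (hA : A v = a • v) (hC : C v = e • v) :
    A (B v) = (e - a) • B v := by
  have h := congrArg (· v) hABC
  simp only [add_apply, mul_apply_eq_comp, hA, hC, map_smul] at h
  rw [sub_smul, ← h, add_sub_cancel_right]

section Parasupercharges

variable {𝓗 : Type*} [NormedAddCommGroup 𝓗] [InnerProductSpace ℂ 𝓗] [CompleteSpace 𝓗]

lemma sq_two_mul_sqrt_three : ((2 * Real.sqrt 3 : ℝ) : ℂ) ^ 2 = 12 := by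
  norm_cast
  rw [mul_pow, Real.sq_sqrt (by norm_num)]
  norm_num

theorem hermQ1_sq_add_hermQ2_sq (Q : 𝓗 →L[ℂ] 𝓗) :
    hermQ1 Q ^ 2 + hermQ2 Q ^ 2 = (6 : ℂ)⁻¹ • (adjoint Q * Q + Q * adjoint Q) := by
  have h : (adjoint Q + Q) ^ 2 - (adjoint Q - Q) ^ 2
      = (2 : ℂ) • (adjoint Q * Q + Q * adjoint Q) := by
    rw [two_smul]; noncomm_ring
  rw [hermQ1, hermQ2, smul_pow, smul_pow, inv_pow, inv_pow, mul_pow, sq_two_mul_sqrt_three,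
    Complex.I_sq, mul_neg_one, inv_neg, neg_smul, ← sub_eq_add_neg, ← smul_sub, h, smul_smul]
  norm_num

theorem hermQ1_mul_hermQ2_add_hermQ2_mul_hermQ1 (Q : 𝓗 →L[ℂ] 𝓗) :
    hermQ1 Q * hermQ2 Q + hermQ2 Q * hermQ1 Q
      = (-Complex.I / 6) • (adjoint Q ^ 2 - Q ^ 2) := by
  have h : (adjoint Q + Q) * (adjoint Q - Q) + (adjoint Q - Q) * (adjoint Q + Q)
      = (2 : ℂ) • (adjoint Q ^ 2 - Q ^ 2) := by
    rw [two_smul]; noncomm_ring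
  rw [hermQ1, hermQ2, smul_mul_smul_comm, smul_mul_smul_comm, mul_comm (_ * Complex.I)⁻¹,
    ← smul_add, h, smul_smul]
  congr 1
  rw [← mul_inv, ← mul_assoc, ← sq, sq_two_mul_sqrt_three, mul_inv, Complex.inv_I]
  ring

open ComplexOrder in
theorem isPositive_hermQ1_sq_add_hermQ2_sq (Q : 𝓗 →L[ℂ] 𝓗) :
    (hermQ1 Q ^ 2 + hermQ2 Q ^ 2).IsPositive := by
  rw [hermQ1_sq_add_hermQ2_sq]
  exact ((isPositive_adjoint_comp_self Q).add (isPositive_self_comp_adjoint Q)).smul_of_nonneg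
    (by positivity)

theorem hermQ1_sq_add_hermQ2_sq_anticomm {Q H : 𝓗 →L[ℂ] 𝓗}
    (hii : Q ^ 3 * adjoint Q + Q ^ 2 * adjoint Q * Q + Q * adjoint Q * Q ^ 2
      + adjoint Q * Q ^ 3 = 6 * (Q ^ 2 * H))
    (hiv : (adjoint Q) ^ 3 * Q + (adjoint Q) ^ 2 * Q * adjoint Q
      + adjoint Q * Q * (adjoint Q) ^ 2 + Q * (adjoint Q) ^ 3 = 6 * ((adjoint Q) ^ 2 * H)) :
    (hermQ1 Q ^ 2 + hermQ2 Q ^ 2) * (hermQ1 Q * hermQ2 Q + hermQ2 Q * hermQ1 Q)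
      + (hermQ1 Q * hermQ2 Q + hermQ2 Q * hermQ1 Q) * (hermQ1 Q ^ 2 + hermQ2 Q ^ 2)
      = (hermQ1 Q * hermQ2 Q + hermQ2 Q * hermQ1 Q) * H := by
  set P := adjoint Q
  have key : (P * Q + Q * P) * (P ^ 2 - Q ^ 2) + (P ^ 2 - Q ^ 2) * (P * Q + Q * P)
      = (6 : ℂ) • ((P ^ 2 - Q ^ 2) * H) :=
    calc _ = (P ^ 3 * Q + P ^ 2 * Q * P + P * Q * P ^ 2 + Q * P ^ 3)
          - (Q ^ 3 * P + Q ^ 2 * P * Q + Q * P * Q ^ 2 + P * Q ^ 3) := by noncomm_ring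
      _ = 6 * ((P ^ 2 - Q ^ 2) * H) := by rw [hiv, hii, sub_mul, mul_sub]
      _ = (6 : ℂ) • ((P ^ 2 - Q ^ 2) * H) := by
        rw [ofNat_smul_eq_nsmul ℂ 6, nsmul_eq_mul, Nat.cast_ofNat]
  rw [hermQ1_sq_add_hermQ2_sq, hermQ1_mul_hermQ2_add_hermQ2_mul_hermQ1, smul_mul_smul_comm,
    smul_mul_smul_comm, mul_comm (-Complex.I / 6), ← smul_add, key, smul_mul_assoc, smul_smul]
  congr 1
  ring

end Parasupercharges

theorem stmt12_general {𝓗 : Type*} [NormedAddCommGroup 𝓗] [InnerProductSpace ℂ 𝓗] [CompleteSpace 𝓗]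
    (Q H : 𝓗 →L[ℂ] 𝓗)
    (hii : Q ^ 3 * adjoint Q + Q ^ 2 * adjoint Q * Q + Q * adjoint Q * Q ^ 2
      + adjoint Q * Q ^ 3 = 6 * (Q ^ 2 * H))
    (hiv : (adjoint Q) ^ 3 * Q + (adjoint Q) ^ 2 * Q * adjoint Q
      + adjoint Q * Q * (adjoint Q) ^ 2 + Q * (adjoint Q) ^ 3 = 6 * ((adjoint Q) ^ 2 * H))
    (Ψ : 𝓗) (q₁ E : ℝ)
    (hq₁ : hermQ1 Q Ψ = (q₁ : ℂ) • Ψ)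
    (hE : H Ψ = (E : ℂ) • Ψ)
    (hker : ((hermQ2 Q) ^ 2) Ψ = ((q₁ : ℂ) ^ 2) • Ψ) :
    (((hermQ1 Q) ^ 2 + (hermQ2 Q) ^ 2)
        ((hermQ1 Q * hermQ2 Q + hermQ2 Q * hermQ1 Q) Ψ)
      = ((E - 2 * q₁ ^ 2 : ℝ) : ℂ) • ((hermQ1 Q * hermQ2 Q + hermQ2 Q * hermQ1 Q) Ψ)) ∧
    ((hermQ1 Q * hermQ2 Q + hermQ2 Q * hermQ1 Q) Ψ ≠ 0 →
      2 * q₁ ^ 2 ≤ E ∧ 0 ≤ 2 * q₁ ^ 2) := by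
  have hq₁_sq : (hermQ1 Q ^ 2) Ψ = (q₁ : ℂ) ^ 2 • Ψ := by
    rw [sq, mul_apply_eq_comp, hq₁, map_smul, hq₁, smul_smul, sq]
  have hKΨ : (hermQ1 Q ^ 2 + hermQ2 Q ^ 2) Ψ = ((2 * q₁ ^ 2 : ℝ) : ℂ) • Ψ := by
    rw [add_apply, hq₁_sq, hker, ← add_smul]
    push_cast
    ring_nf
  have hMΨ := apply_eq_smul_of_mul_add_mul_eq (hermQ1_sq_add_hermQ2_sq_anticomm hii hiv) hKΨ hE
  rw [← Complex.ofReal_sub] at hMΨ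
  refine ⟨hMΨ, fun hne => ⟨?_, by positivity⟩⟩
  exact sub_nonneg.mp ((isPositive_hermQ1_sq_add_hermQ2_sq Q).nonneg_of_apply_eq_smul hne hMΨ)

/-- Assuming the p=3 parasupersymmetry algebra, if `Ψ ≠ 0` satisfies
`Q₁Ψ = q₁Ψ`, `HΨ = EΨ` and `Q₂²Ψ = q₁²Ψ`, then
`(Q₁² + Q₂²)(Q₁Q₂ + Q₂Q₁)Ψ = (E − 2q₁²)(Q₁Q₂ + Q₂Q₁)Ψ`; consequently, if
`(Q₁Q₂ + Q₂Q₁)Ψ ≠ 0`, then `E ≥ 2q₁² ≥ 0`. -/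
theorem stmt12 {𝓗 : Type*} [NormedAddCommGroup 𝓗] [InnerProductSpace ℂ 𝓗] [CompleteSpace 𝓗]
    (Q H : 𝓗 →L[ℂ] 𝓗) (hH : IsSelfAdjoint H)
    (hQH : Q * H = H * Q) (hQdH : adjoint Q * H = H * adjoint Q)
    (hii : Q ^ 3 * adjoint Q + Q ^ 2 * adjoint Q * Q + Q * adjoint Q * Q ^ 2
      + adjoint Q * Q ^ 3 = 6 * (Q ^ 2 * H))
    (hiii : Q * (adjoint Q) ^ 2 * Q = adjoint Q * Q ^ 2 * adjoint Q)
    (hiv : (adjoint Q) ^ 3 * Q + (adjoint Q) ^ 2 * Q * adjoint Q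
      + adjoint Q * Q * (adjoint Q) ^ 2 + Q * (adjoint Q) ^ 3 = 6 * ((adjoint Q) ^ 2 * H))
    (hQ4 : Q ^ 4 = 0) (hQd4 : (adjoint Q) ^ 4 = 0)
    (Ψ : 𝓗) (hΨ : Ψ ≠ 0) (q₁ E : ℝ)
    (hq₁ : hermQ1 Q Ψ = (q₁ : ℂ) • Ψ)
    (hE : H Ψ = (E : ℂ) • Ψ)
    (hker : ((hermQ2 Q) ^ 2) Ψ = ((q₁ : ℂ) ^ 2) • Ψ) :
    (((hermQ1 Q) ^ 2 + (hermQ2 Q) ^ 2)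
        ((hermQ1 Q * hermQ2 Q + hermQ2 Q * hermQ1 Q) Ψ)
      = ((E - 2 * q₁ ^ 2 : ℝ) : ℂ) • ((hermQ1 Q * hermQ2 Q + hermQ2 Q * hermQ1 Q) Ψ)) ∧
    ((hermQ1 Q * hermQ2 Q + hermQ2 Q * hermQ1 Q) Ψ ≠ 0 →
      2 * q₁ ^ 2 ≤ E ∧ 0 ≤ 2 * q₁ ^ 2) :=
  stmt12_general Q H hii hiv Ψ q₁ E hq₁ hE hker
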